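/- arXiv:2307.13976 — 7 statements merged into one kernel-verified Lean document; each statement's English description precedes it below -/
import Mathlib

section
/- Let G be a finite group and let N and K be subgroups with N normal in G and G = NK. Then the map sending H to N ∩ H is a bijection from the set of maximal subgroups of G containing K to the set of maximal K-invariant proper subgroups of N containing N ∩ K. -/
section Aux

variable {G : Type*} [Group G]

lemma aux_mem_sup_of_inv {M K : Subgroup G}
    (hinv : ∀ k ∈ K, ∀ m ∈ M, k * m * k⁻¹ ∈ M) {x : G} (hx : x ∈ M ⊔ K) :
    ∃ m ∈ M, ∃ k ∈ K, m * k = x := by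
  let S : Subgroup G :=
    { carrier := {x | ∃ m ∈ M, ∃ k ∈ K, m * k = x}
      one_mem' := ⟨1, one_mem _, 1, one_mem _, one_mul 1⟩
      mul_mem' := by
        rintro a b ⟨m1, hm1, k1, hk1, rfl⟩ ⟨m2, hm2, k2, hk2, rfl⟩
        refine ⟨m1 * (k1 * m2 * k1⁻¹), mul_mem hm1 (hinv _ hk1 _ hm2), k1 * k2,
          mul_mem hk1 hk2, by group⟩
      inv_mem' := by
        rintro a ⟨m, hm, k, hk, rfl⟩
        refine ⟨k⁻¹ * m⁻¹ * (k⁻¹)⁻¹, hinv _ (inv_mem hk) _ (inv_mem hm), k⁻¹, inv_mem hk, by group⟩ }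
  have hle : M ⊔ K ≤ S := by
    refine sup_le (fun m hm => ⟨m, hm, 1, one_mem _, mul_one m⟩)
      (fun k hk => ⟨1, one_mem _, k, hk, one_mul k⟩)
  exact hle hx

/-- Key lemma B: `N ⊓ (M ⊔ K) = M`. -/
lemma aux_inf_sup {N M K : Subgroup G} (hMN : M ≤ N) (hNK : N ⊓ K ≤ M)
    (hinv : ∀ k ∈ K, ∀ m ∈ M, k * m * k⁻¹ ∈ M) : N ⊓ (M ⊔ K) = M := by
  refine le_antisymm ?_ (le_inf hMN le_sup_left)
  rintro x ⟨hxN, hxMK⟩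
  obtain ⟨m, hm, k, hk, rfl⟩ := aux_mem_sup_of_inv hinv hxMK
  have hkN : k ∈ N := by
    have := mul_mem (inv_mem (hMN hm)) hxN
    simpa using this
  exact mul_mem hm (hNK ⟨hkN, hk⟩)

/-- Key lemma C: if `K ≤ H` then `(N ⊓ H) ⊔ K = H`. -/
lemma aux_sup_inf {N K H : Subgroup G} [N.Normal] (hG : N ⊔ K = ⊤) (hKH : K ≤ H) :
    (N ⊓ H) ⊔ K = H := by
  refine le_antisymm (sup_le inf_le_right hKH) ?_
  intro x hx
  have hxtop : x ∈ (↑(N ⊔ K) : Set G) := by rw [hG]; trivial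
  rw [Subgroup.normal_mul] at hxtop
  obtain ⟨n, hn, k, hk, rfl⟩ := hxtop
  have hnH : n ∈ H := by
    have := mul_mem hx (inv_mem (hKH hk))
    simpa using this
  exact mul_mem (le_sup_left (a := N ⊓ H) (b := K) ⟨hn, hnH⟩) (le_sup_right (a := N ⊓ H) hk)

end Aux

/-- Lemma 3.2: if `G = NK` with `N` normal, then `H ↦ N ⊓ H` is a bijection from the set of
maximal subgroups of `G` containing `K` to the set of maximal `K`-invariant proper subgroups
of `N` containing `N ⊓ K`. -/
theorem stmt_4 {G : Type*} [Group G] [Finite G] (N K : Subgroup G) [N.Normal]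
    (hG : N ⊔ K = ⊤) :
    Set.BijOn (fun H : Subgroup G => N ⊓ H)
      {H : Subgroup G | IsCoatom H ∧ K ≤ H}
      {M : Subgroup G |
        (M < N ∧ N ⊓ K ≤ M ∧ ∀ k ∈ K, ∀ m ∈ M, k * m * k⁻¹ ∈ M) ∧
        ∀ M' : Subgroup G,
          (M' < N ∧ N ⊓ K ≤ M' ∧ ∀ k ∈ K, ∀ m ∈ M', k * m * k⁻¹ ∈ M') →
          M ≤ M' → M' = M} := by
  constructor
  · -- MapsTo
    rintro H ⟨hH, hKH⟩
    have hHeq : (N ⊓ H) ⊔ K = H := aux_sup_inf hG hKH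
    have hinv : ∀ k ∈ K, ∀ m ∈ N ⊓ H, k * m * k⁻¹ ∈ N ⊓ H := by
      rintro k hk m ⟨hmN, hmH⟩
      exact ⟨Subgroup.Normal.conj_mem ‹N.Normal› m hmN k,
        H.mul_mem (H.mul_mem (hKH hk) hmH) (H.inv_mem (hKH hk))⟩
    refine ⟨⟨?_, le_inf (fun x hx => hx.1) (fun x hx => hKH hx.2), hinv⟩, ?_⟩
    · -- N ⊓ H < N
      refine lt_of_le_of_ne inf_le_left (fun h => hH.1 ?_)
      have : N ≤ H := h ▸ inf_le_right
      rw [← top_le_iff, ← hG]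
      exact sup_le this hKH
    · -- maximality
      rintro M' ⟨hM'N, hNKM', hinv'⟩ hle
      have hHle : H ≤ M' ⊔ K := by
        rw [← hHeq]
        exact sup_le (le_trans hle le_sup_left) le_sup_right
      rcases lt_or_eq_of_le hHle with hlt | heq
      · exfalso
        have := hH.2 _ hlt
        have hN : N ⊓ (M' ⊔ K) = M' := aux_inf_sup (le_of_lt hM'N) hNKM' hinv'
        rw [this, inf_top_eq] at hN
        exact hM'N.ne' hN
      · rw [← aux_inf_sup (le_of_lt hM'N) hNKM' hinv', ← heq]
  constructor
  · -- InjOn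
    rintro H1 ⟨_, hKH1⟩ H2 ⟨_, hKH2⟩ h
    simp only at h
    rw [← aux_sup_inf hG hKH1, ← aux_sup_inf hG hKH2, h]
  · -- SurjOn
    rintro M ⟨⟨hMN, hNKM, hinv⟩, hmax⟩
    refine ⟨M ⊔ K, ⟨⟨?_, ?_⟩, le_sup_right⟩, aux_inf_sup hMN.le hNKM hinv⟩
    · -- M ⊔ K ≠ ⊤
      intro h
      have := aux_inf_sup hMN.le hNKM hinv
      rw [h, inf_top_eq] at this
      exact hMN.ne' this
    · -- maximal
      intro H' hlt
      have hKH' : K ≤ H' := le_trans le_sup_right hlt.le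
      have hinv' : ∀ k ∈ K, ∀ m ∈ N ⊓ H', k * m * k⁻¹ ∈ N ⊓ H' := by
        rintro k hk m ⟨hmN, hmH⟩
        exact ⟨Subgroup.Normal.conj_mem ‹N.Normal› m hmN k,
          H'.mul_mem (H'.mul_mem (hKH' hk) hmH) (H'.inv_mem (hKH' hk))⟩
      rcases lt_or_eq_of_le (inf_le_left : N ⊓ H' ≤ N) with hlt' | heq
      · exfalso
        have hMle : M ≤ N ⊓ H' :=
          le_inf hMN.le (le_trans le_sup_left hlt.le)
        have := hmax _ ⟨hlt', le_inf inf_le_left (fun x hx => hKH' hx.2), hinv'⟩ hMle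
        have hH'eq : H' = M ⊔ K := by
          rw [← aux_sup_inf (N := N) hG hKH', this]
        exact hlt.ne' hH'eq
      · -- N ⊓ H' = N so N ≤ H'
        have hNle : N ≤ H' := heq ▸ inf_le_right
        rw [← top_le_iff, ← hG]
        exact sup_le hNle hKH'
end

section
/- Let G = NK be a finite group where N = L₁ × ⋯ × L_t is a normal subgroup with each L_i a nonabelian simple group, K is a subgroup not containing N, K permutes the factors L_i transitively by conjugation, and K₁ = L₁ ∩ K is nontrivial. Then the map sending T to L₁ ∩ T is a bijection from the set of maximal K-invariant subgroups of N containing N ∩ K to the set of maximal N_K(L₁)-invariant subgroups of L₁ containing K₁. -/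
/-!
A maximal `K`-invariant subgroup `T` is determined by its trace on `L₁`. Each coordinate `xᵢ`
of an element `x ∈ T` normalizes `Lᵢ ⊓ T`, so `T` lies in the `K`-invariant subgroup
`∏ N_{Lᵢ}(Lᵢ ⊓ T)`. This subgroup is proper: otherwise `L₁ ⊓ T` would be normal in the simple
group `L₁`, while it contains `K₁ ≠ 1` and is not all of `L₁`. Maximality then forces
`T = ∏ (Lᵢ ⊓ T)`, the join of the `K`-conjugates of `L₁ ⊓ T`. Conversely, the `K`-conjugates
of an `N_K(L₁)`-invariant `M < L₁` generate a `K`-invariant subgroup meeting `L₁` exactly in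
`M`, and the same normalizer construction enlarges it to a proper `K`-invariant subgroup
containing `N ⊓ K`.
-/

open scoped Pointwise

theorem maximal_iff_forall_eq {α : Type*} [PartialOrder α] {P : α → Prop} {x : α} :
    Maximal P x ↔ P x ∧ ∀ y, P y → x ≤ y → y = x :=
  ⟨fun h => ⟨h.1, fun _ hy hxy => h.eq_of_ge hy hxy⟩,
    fun h => ⟨h.1, fun y hy hxy => (h.2 y hy hxy).le⟩⟩

namespace Subgroup

variable {G : Type*} [Group G]

theorem mem_normalizer_iff_conj_smul_eq {H : Subgroup G} {g : G} :
    g ∈ normalizer (H : Set G) ↔ MulAut.conj g • H = H :=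
  mem_normalizer_iff_map_conj_eq

theorem le_normalizer_of_conj_smul_le {K A : Subgroup G}
    (h : ∀ k ∈ K, MulAut.conj k • A ≤ A) : K ≤ normalizer (A : Set G) :=
  le_set_normalizer_iff.2 fun k hk x hx => h k hk (smul_mem_pointwise_smul x _ A hx)

theorem conj_smul_iSup {ι : Sort*} (g : G) (A : ι → Subgroup G) :
    MulAut.conj g • ⨆ i, A i = ⨆ i, MulAut.conj g • A i :=
  map_iSup _ A

theorem eq_bot_or_eq_of_le_normalizer {A L : Subgroup G} [IsSimpleGroup L] (hAL : A ≤ L)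
    (hL : L ≤ normalizer (A : Set G)) : A = ⊥ ∨ A = L := by
  have : (A.subgroupOf L).Normal := (normal_subgroupOf_iff_le_normalizer hAL).2 hL
  refine (IsSimpleGroup.eq_bot_or_eq_top_of_normal _ this).imp (fun h => ?_) (fun h => ?_)
  · rwa [subgroupOf_eq_bot, disjoint_of_le_iff_left_eq_bot hAL] at h
  · exact le_antisymm hAL (subgroupOf_eq_top.1 h)

theorem conj_smul_normalizer (g : G) (A : Subgroup G) :
    MulAut.conj g • normalizer (A : Set G) =
      normalizer ((MulAut.conj g • A : Subgroup G) : Set G) :=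
  map_equiv_normalizer_eq A (MulAut.conj g)

theorem inf_inf_normalizer (L K : Subgroup G) : L ⊓ (K ⊓ normalizer (L : Set G)) = L ⊓ K := by
  rw [inf_left_comm, inf_eq_left.2 le_normalizer, inf_comm]

section CommutingFamily

variable {ι : Type*} {L : ι → Subgroup G}

theorem iSup_ne_le_centralizer (hcomm : ∀ i j, i ≠ j → ∀ x ∈ L i, ∀ y ∈ L j, x * y = y * x)
    {D : ι → Subgroup G} (hD : ∀ i, D i ≤ L i) (i : ι) :
    (⨆ j, ⨆ _ : j ≠ i, D j) ≤ centralizer (L i : Set G) :=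
  iSup₂_le fun j hj x hx =>
    mem_centralizer_iff.2 fun y hy => hcomm i j (Ne.symm hj) y hy x (hD j hx)

theorem iSup_le_normalizer (hcomm : ∀ i j, i ≠ j → ∀ x ∈ L i, ∀ y ∈ L j, x * y = y * x)
    (i : ι) : (⨆ j, L j) ≤ normalizer (L i : Set G) := by
  rw [iSup_split_single L i]
  exact sup_le le_normalizer
    ((iSup_ne_le_centralizer hcomm (fun _ => le_rfl) i).trans (centralizer_le_normalizer _))

theorem inf_iSup_of_le (hcomm : ∀ i j, i ≠ j → ∀ x ∈ L i, ∀ y ∈ L j, x * y = y * x)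
    (hindep : ∀ i, L i ⊓ (⨆ j, ⨆ _ : j ≠ i, L j) = ⊥)
    {D : ι → Subgroup G} (hD : ∀ i, D i ≤ L i) (i : ι) : L i ⊓ ⨆ j, D j = D i := by
  refine le_antisymm ?_ (le_inf (hD i) (le_iSup D i))
  rintro x ⟨hxL, hx⟩
  have hDi : D i ≤ normalizer ((⨆ j, ⨆ _ : j ≠ i, D j : Subgroup G) : Set G) :=
    (hD i).trans <| (le_centralizer_iff.1 (iSup_ne_le_centralizer hcomm hD i)).trans
      (centralizer_le_normalizer _)
  obtain ⟨d, hd, c, hc, rfl⟩ : x ∈ (D i : Set G) * (⨆ j, ⨆ _ : j ≠ i, D j : Subgroup G) := by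
    rw [← coe_mul_of_left_le_normalizer_right _ _ hDi, ← iSup_split_single]
    exact hx
  have hc' : c ∈ L i ⊓ ⨆ j, ⨆ _ : j ≠ i, L j :=
    ⟨by simpa using mul_mem (inv_mem (hD i hd)) hxL, iSup₂_mono (fun j _ => hD j) hc⟩
  rw [hindep i, mem_bot] at hc'
  simpa [hc'] using hd

theorem noncommPiCoprod_mul_mul_inv [Fintype ι] [DecidableEq ι]
    {hc : Pairwise fun i j => ∀ x y : G, x ∈ L i → y ∈ L j → Commute x y}
    (f : ∀ i, L i) {i : ι} {h : G} (hh : h ∈ L i) :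
    noncommPiCoprod hc f * h * (noncommPiCoprod hc f)⁻¹ = (f i : G) * h * (f i : G)⁻¹ := by
  have hconj : f * Pi.mulSingle i ⟨h, hh⟩ * f⁻¹ = Pi.mulSingle i (f i * ⟨h, hh⟩ * (f i)⁻¹) := by
    funext j
    rcases eq_or_ne j i with rfl | hj
    · simp
    · simp [hj]
  calc noncommPiCoprod hc f * h * (noncommPiCoprod hc f)⁻¹
      = noncommPiCoprod hc (f * Pi.mulSingle i ⟨h, hh⟩ * f⁻¹) := by simp
    _ = (f i : G) * h * (f i : G)⁻¹ := by rw [hconj, noncommPiCoprod_mulSingle]; rfl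

theorem le_iSup_inf_normalizer [Finite ι]
    (hcomm : ∀ i j, i ≠ j → ∀ x ∈ L i, ∀ y ∈ L j, x * y = y * x)
    {D : ι → Subgroup G} (hD : ∀ i, D i ≤ L i) {X : Subgroup G}
    (hXL : X ≤ ⨆ i, L i) (hXD : ∀ i, X ≤ normalizer (D i : Set G)) :
    X ≤ ⨆ i, L i ⊓ normalizer (D i : Set G) := by
  classical
  have := Fintype.ofFinite ι
  have hc : Pairwise fun i j => ∀ x y : G, x ∈ L i → y ∈ L j → Commute x y :=
    fun i j hij x y hx hy => hcomm i j hij x hx y hy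
  intro x hx
  obtain ⟨f, rfl⟩ : x ∈ (noncommPiCoprod hc).range := by
    rw [noncommPiCoprod_range]
    exact hXL hx
  -- on `L i`, conjugation by `x` agrees with conjugation by its `i`-th coordinate
  have hfD : ∀ i, (f i : G) ∈ normalizer (D i : Set G) := fun i => mem_normalizer_iff.2 fun h => by
    by_cases hh : h ∈ L i
    · rw [← noncommPiCoprod_mul_mul_inv f hh]
      exact mem_normalizer_iff.1 (hXD i hx) h
    · exact iff_of_false (fun h' => hh (hD i h'))
        fun h' => hh ((mem_normalizer_iff.1 (le_normalizer (f i).2) h).2 (hD i h'))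
  rw [noncommPiCoprod_apply]
  exact noncommProd_mem _ _ fun i _ =>
    le_iSup (fun i => L i ⊓ normalizer (D i : Set G)) i ⟨(f i).2, hfD i⟩

end CommutingFamily

def conjSup (K M : Subgroup G) : Subgroup G := ⨆ k : K, MulAut.conj (k : G) • M

theorem conj_smul_le_conjSup {K : Subgroup G} (M : Subgroup G) {k : G} (hk : k ∈ K) :
    MulAut.conj k • M ≤ conjSup K M :=
  le_iSup (fun k : K => MulAut.conj (k : G) • M) ⟨k, hk⟩

theorem le_conjSup (K M : Subgroup G) : M ≤ conjSup K M := by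
  simpa using conj_smul_le_conjSup (K := K) M (one_mem K)

theorem conjSup_mono (K : Subgroup G) {M M' : Subgroup G} (h : M ≤ M') :
    conjSup K M ≤ conjSup K M' :=
  iSup_mono fun _ => pointwise_smul_le_pointwise_smul_iff.2 h

theorem le_normalizer_conjSup (K M : Subgroup G) : K ≤ normalizer (conjSup K M : Set G) :=
  le_normalizer_of_conj_smul_le fun k hk => by
    rw [conjSup, conj_smul_iSup]
    refine iSup_le fun k' => ?_
    rw [smul_smul, ← map_mul]
    exact conj_smul_le_conjSup M (mul_mem hk k'.2)

theorem conjSup_le_of_le_normalizer {K M T : Subgroup G} (hMT : M ≤ T)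
    (hKT : K ≤ normalizer (T : Set G)) : conjSup K M ≤ T :=
  iSup_le fun k => calc
    MulAut.conj (k : G) • M ≤ MulAut.conj (k : G) • T := pointwise_smul_le_pointwise_smul_iff.2 hMT
    _ = T := mem_normalizer_iff_conj_smul_eq.1 (hKT k.2)

def IsProperInvariant (N K T : Subgroup G) : Prop :=
  T < N ∧ N ⊓ K ≤ T ∧ K ≤ normalizer (T : Set G)

theorem isProperInvariant_iff {N K T : Subgroup G} :
    IsProperInvariant N K T ↔ T < N ∧ N ⊓ K ≤ T ∧ ∀ k ∈ K, ∀ x ∈ T, k * x * k⁻¹ ∈ T :=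
  and_congr_right' (and_congr_right' le_set_normalizer_iff)

theorem isProperInvariant_inf_normalizer_iff {L K M : Subgroup G} :
    IsProperInvariant L (K ⊓ normalizer (L : Set G)) M ↔
      M < L ∧ L ⊓ K ≤ M ∧ ∀ k ∈ K, MulAut.conj k • L = L → ∀ x ∈ M, k * x * k⁻¹ ∈ M := by
  simp only [IsProperInvariant, inf_inf_normalizer, le_set_normalizer_iff, mem_inf,
    mem_normalizer_iff_conj_smul_eq, and_imp, SetLike.mem_coe]

def factorNormalizer {ι : Type*} (L : ι → Subgroup G) (T : Subgroup G) : Subgroup G :=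
  ⨆ i, L i ⊓ normalizer ((L i ⊓ T : Subgroup G) : Set G)

section TransitiveFamily

variable {ι : Type*} {L : ι → Subgroup G} {K : Subgroup G} {i₀ : ι}

theorem iSup_le_of_le_normalizer (htrans : ∀ j, ∃ k ∈ K, MulAut.conj k • L i₀ = L j)
    {T : Subgroup G} (hKT : K ≤ normalizer (T : Set G)) (h : L i₀ ≤ T) : ⨆ j, L j ≤ T :=
  iSup_le fun j => by
    obtain ⟨k, hk, hkj⟩ := htrans j
    rw [← hkj]
    exact (conj_smul_le_conjSup _ hk).trans (conjSup_le_of_le_normalizer h hKT)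

theorem iSup_inf_le_conjSup (htrans : ∀ j, ∃ k ∈ K, MulAut.conj k • L i₀ = L j)
    {T : Subgroup G} (hKT : K ≤ normalizer (T : Set G)) :
    ⨆ j, L j ⊓ T ≤ conjSup K (L i₀ ⊓ T) :=
  iSup_le fun j => by
    obtain ⟨k, hk, hkj⟩ := htrans j
    rw [← hkj, ← mem_normalizer_iff_conj_smul_eq.1 (hKT hk), ← smul_inf,
      mem_normalizer_iff_conj_smul_eq.1 (hKT hk)]
    exact conj_smul_le_conjSup _ hk

theorem conjSup_le_iSup (hperm : ∀ k ∈ K, ∀ i, ∃ j, MulAut.conj k • L i = L j)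
    {M : Subgroup G} (hM : M ≤ L i₀) : conjSup K M ≤ ⨆ j, L j :=
  iSup_le fun k => by
    obtain ⟨j, hj⟩ := hperm k k.2 i₀
    exact (pointwise_smul_le_pointwise_smul_iff.2 hM).trans (hj ▸ le_iSup L j)

theorem inf_conjSup (hcomm : ∀ i j, i ≠ j → ∀ x ∈ L i, ∀ y ∈ L j, x * y = y * x)
    (hindep : ∀ i, L i ⊓ (⨆ j, ⨆ _ : j ≠ i, L j) = ⊥)
    (hperm : ∀ k ∈ K, ∀ i, ∃ j, MulAut.conj k • L i = L j)
    {M : Subgroup G} (hM : M ≤ L i₀)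
    (hKM : K ⊓ normalizer (L i₀ : Set G) ≤ normalizer (M : Set G)) :
    L i₀ ⊓ conjSup K M = M := by
  -- sort the conjugates of `M` according to the factor they land in
  let D : ι → Subgroup G := fun j =>
    ⨆ (k : K) (_ : MulAut.conj (k : G) • L i₀ = L j), MulAut.conj (k : G) • M
  have hD : ∀ j, D j ≤ L j := fun j =>
    iSup₂_le fun k hk => hk ▸ pointwise_smul_le_pointwise_smul_iff.2 hM
  have hle : conjSup K M ≤ ⨆ j, D j := iSup_le fun k => by
    obtain ⟨j, hj⟩ := hperm k k.2 i₀
    exact le_iSup_of_le j (le_iSup₂_of_le k hj le_rfl)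
  have hDi₀ : D i₀ ≤ M := iSup₂_le fun k hk =>
    (mem_normalizer_iff_conj_smul_eq.1 (hKM ⟨k.2, mem_normalizer_iff_conj_smul_eq.2 hk⟩)).le
  refine le_antisymm ?_ (le_inf hM (le_conjSup K M))
  calc L i₀ ⊓ conjSup K M ≤ L i₀ ⊓ ⨆ j, D j := inf_le_inf_left _ hle
    _ = D i₀ := inf_iSup_of_le hcomm hindep hD i₀
    _ ≤ M := hDi₀

theorem le_factorNormalizer [Finite ι]
    (hcomm : ∀ i j, i ≠ j → ∀ x ∈ L i, ∀ y ∈ L j, x * y = y * x) {T X : Subgroup G}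
    (hXL : X ≤ ⨆ i, L i) (hXT : X ≤ normalizer (T : Set G)) : X ≤ factorNormalizer L T :=
  le_iSup_inf_normalizer hcomm (fun _ => inf_le_left) hXL fun i =>
    (le_inf (hXL.trans (iSup_le_normalizer hcomm i)) hXT).trans inf_normalizer_le_normalizer_inf

theorem inf_factorNormalizer (hcomm : ∀ i j, i ≠ j → ∀ x ∈ L i, ∀ y ∈ L j, x * y = y * x)
    (hindep : ∀ i, L i ⊓ (⨆ j, ⨆ _ : j ≠ i, L j) = ⊥) (T : Subgroup G) (i : ι) :
    L i ⊓ factorNormalizer L T = L i ⊓ normalizer ((L i ⊓ T : Subgroup G) : Set G) :=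
  inf_iSup_of_le hcomm hindep (fun _ => inf_le_left) i

theorem le_normalizer_factorNormalizer (hperm : ∀ k ∈ K, ∀ i, ∃ j, MulAut.conj k • L i = L j)
    {T : Subgroup G} (hKT : K ≤ normalizer (T : Set G)) :
    K ≤ normalizer (factorNormalizer L T : Set G) :=
  le_normalizer_of_conj_smul_le fun k hk => by
    rw [factorNormalizer, conj_smul_iSup]
    refine iSup_le fun i => ?_
    obtain ⟨j, hj⟩ := hperm k hk i
    rw [smul_inf, conj_smul_normalizer, smul_inf, hj, mem_normalizer_iff_conj_smul_eq.1 (hKT hk)]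
    exact le_iSup (fun i => L i ⊓ normalizer ((L i ⊓ T : Subgroup G) : Set G)) j

theorem inf_isProperInvariant (htrans : ∀ j, ∃ k ∈ K, MulAut.conj k • L i₀ = L j)
    {T : Subgroup G} (hT : IsProperInvariant (⨆ i, L i) K T) :
    IsProperInvariant (L i₀) (K ⊓ normalizer (L i₀ : Set G)) (L i₀ ⊓ T) := by
  obtain ⟨hTL, hKT, hTK⟩ := hT
  refine ⟨inf_le_left.lt_of_ne fun h => hTL.not_ge ?_, ?_, ?_⟩
  · exact iSup_le_of_le_normalizer htrans hTK (h.ge.trans inf_le_right)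
  · rw [inf_inf_normalizer]
    exact le_inf inf_le_left ((inf_le_inf_right K (le_iSup L i₀)).trans hKT)
  · exact (le_inf inf_le_right (inf_le_left.trans hTK)).trans inf_normalizer_le_normalizer_inf

theorem isProperInvariant_factorNormalizer [Finite ι]
    (hcomm : ∀ i j, i ≠ j → ∀ x ∈ L i, ∀ y ∈ L j, x * y = y * x)
    (hindep : ∀ i, L i ⊓ (⨆ j, ⨆ _ : j ≠ i, L j) = ⊥) [IsSimpleGroup (L i₀)]
    (hperm : ∀ k ∈ K, ∀ i, ∃ j, MulAut.conj k • L i = L j) (hK₁ : L i₀ ⊓ K ≠ ⊥)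
    {T : Subgroup G} (hKT : K ≤ normalizer (T : Set G))
    (hT₁ : IsProperInvariant (L i₀) (K ⊓ normalizer (L i₀ : Set G)) (L i₀ ⊓ T)) :
    IsProperInvariant (⨆ i, L i) K (factorNormalizer L T) := by
  refine ⟨(iSup_mono fun _ => inf_le_left).lt_of_ne fun h => ?_,
    le_factorNormalizer hcomm inf_le_left (inf_le_right.trans hKT),
    le_normalizer_factorNormalizer hperm hKT⟩
  -- otherwise `L i₀ ⊓ T` would be normal in the simple group `L i₀`
  have hnorm : L i₀ ≤ normalizer ((L i₀ ⊓ T : Subgroup G) : Set G) := by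
    have := inf_factorNormalizer hcomm hindep T i₀
    rw [show factorNormalizer L T = ⨆ i, L i from h, inf_eq_left.2 (le_iSup L i₀)] at this
    exact this.le.trans inf_le_right
  rcases eq_bot_or_eq_of_le_normalizer inf_le_left hnorm with hbot | htop
  · rw [← inf_inf_normalizer] at hK₁
    exact hK₁ (le_bot_iff.1 (hbot ▸ hT₁.2.1))
  · exact hT₁.1.ne htop

theorem exists_isProperInvariant_conjSup_le [Finite ι]
    (hcomm : ∀ i j, i ≠ j → ∀ x ∈ L i, ∀ y ∈ L j, x * y = y * x)
    (hindep : ∀ i, L i ⊓ (⨆ j, ⨆ _ : j ≠ i, L j) = ⊥) [IsSimpleGroup (L i₀)]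
    (hperm : ∀ k ∈ K, ∀ i, ∃ j, MulAut.conj k • L i = L j) (hK₁ : L i₀ ⊓ K ≠ ⊥)
    {M : Subgroup G} (hM : IsProperInvariant (L i₀) (K ⊓ normalizer (L i₀ : Set G)) M) :
    ∃ T, IsProperInvariant (⨆ i, L i) K T ∧ conjSup K M ≤ T := by
  have hML : conjSup K M ≤ ⨆ i, L i := conjSup_le_iSup hperm hM.1.le
  have hinf : L i₀ ⊓ conjSup K M = M := inf_conjSup hcomm hindep hperm hM.1.le hM.2.2
  exact ⟨_, isProperInvariant_factorNormalizer hcomm hindep hperm hK₁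
    (le_normalizer_conjSup K M) (by rwa [hinf]), le_factorNormalizer hcomm hML le_normalizer⟩

theorem conjSup_inf_eq_of_maximal [Finite ι]
    (hcomm : ∀ i j, i ≠ j → ∀ x ∈ L i, ∀ y ∈ L j, x * y = y * x)
    (hindep : ∀ i, L i ⊓ (⨆ j, ⨆ _ : j ≠ i, L j) = ⊥) [IsSimpleGroup (L i₀)]
    (hperm : ∀ k ∈ K, ∀ i, ∃ j, MulAut.conj k • L i = L j)
    (htrans : ∀ j, ∃ k ∈ K, MulAut.conj k • L i₀ = L j) (hK₁ : L i₀ ⊓ K ≠ ⊥)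
    {T : Subgroup G} (hT : Maximal (IsProperInvariant (⨆ i, L i) K) T) :
    conjSup K (L i₀ ⊓ T) = T := by
  obtain ⟨hTL, -, hKT⟩ := hT.1
  have hST : factorNormalizer L T ≤ T :=
    hT.2 (isProperInvariant_factorNormalizer hcomm hindep hperm hK₁ hKT
      (inf_isProperInvariant htrans hT.1)) (le_factorNormalizer hcomm hTL.le le_normalizer)
  refine le_antisymm (conjSup_le_of_le_normalizer inf_le_right hKT) ?_
  calc T ≤ factorNormalizer L T := le_factorNormalizer hcomm hTL.le le_normalizer
    _ = ⨆ i, L i ⊓ factorNormalizer L T :=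
        iSup_congr fun i => (inf_factorNormalizer hcomm hindep T i).symm
    _ ≤ ⨆ i, L i ⊓ T := iSup_mono fun _ => inf_le_inf_left _ hST
    _ ≤ conjSup K (L i₀ ⊓ T) := iSup_inf_le_conjSup htrans hKT

theorem bijOn_inf_maximal_isProperInvariant [Finite G] [Finite ι]
    (hcomm : ∀ i j, i ≠ j → ∀ x ∈ L i, ∀ y ∈ L j, x * y = y * x)
    (hindep : ∀ i, L i ⊓ (⨆ j, ⨆ _ : j ≠ i, L j) = ⊥) [IsSimpleGroup (L i₀)]
    (hperm : ∀ k ∈ K, ∀ i, ∃ j, MulAut.conj k • L i = L j)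
    (htrans : ∀ j, ∃ k ∈ K, MulAut.conj k • L i₀ = L j) (hK₁ : L i₀ ⊓ K ≠ ⊥) :
    Set.BijOn (L i₀ ⊓ ·) {T | Maximal (IsProperInvariant (⨆ i, L i) K) T}
      {M | Maximal (IsProperInvariant (L i₀) (K ⊓ normalizer (L i₀ : Set G))) M} := by
  have hconjSup := fun T (hT : Maximal _ T) =>
    conjSup_inf_eq_of_maximal hcomm hindep hperm htrans hK₁ hT
  refine ⟨fun T hT => ⟨inf_isProperInvariant htrans hT.1, fun M' hM' hle => ?_⟩,
    fun T₁ hT₁ T₂ hT₂ h => ?_, fun M hM => ?_⟩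
  · obtain ⟨T', hT', hMT'⟩ := exists_isProperInvariant_conjSup_le hcomm hindep hperm hK₁ hM'
    have hT'T : T' ≤ T := hT.2 hT' ((hconjSup T hT).ge.trans ((conjSup_mono K hle).trans hMT'))
    calc M' = L i₀ ⊓ conjSup K M' := (inf_conjSup hcomm hindep hperm hM'.1.le hM'.2.2).symm
      _ ≤ L i₀ ⊓ T := inf_le_inf_left _ (hMT'.trans hT'T)
  · rw [← hconjSup T₁ hT₁, ← hconjSup T₂ hT₂]
    exact congrArg (conjSup K) h
  · obtain ⟨T, hT, hMT⟩ := exists_isProperInvariant_conjSup_le hcomm hindep hperm hK₁ hM.1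
    obtain ⟨T', hTT', hT'⟩ := Finite.exists_le_maximal hT
    have hMT' : M ≤ L i₀ ⊓ T' := le_inf hM.1.1.le ((le_conjSup K M).trans (hMT.trans hTT'))
    exact ⟨T', hT', (hM.2 (inf_isProperInvariant htrans hT'.1) hMT').antisymm hMT'⟩

end TransitiveFamily

end Subgroup

open Subgroup

theorem stmt_6_general {G : Type*} [Group G] [Finite G] (N K : Subgroup G)
    (t : ℕ) (ht : 0 < t) (L : Fin t → Subgroup G)
    (hsup : (⨆ i, L i) = N)
    (hindep : ∀ i : Fin t, L i ⊓ (⨆ j : Fin t, ⨆ _ : j ≠ i, L j) = ⊥)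
    (hcommute : ∀ i j : Fin t, i ≠ j → ∀ x ∈ L i, ∀ y ∈ L j, x * y = y * x)
    (hsimple : ∀ i, IsSimpleGroup ↥(L i))
    (hperm : ∀ k ∈ K, ∀ i : Fin t, ∃ j : Fin t,
        (L i).map (MulAut.conj k).toMonoidHom = L j)
    (htrans : ∀ i j : Fin t, ∃ k ∈ K,
        (L i).map (MulAut.conj k).toMonoidHom = L j)
    (hK1 : L ⟨0, ht⟩ ⊓ K ≠ ⊥) :
    Set.BijOn (fun T : Subgroup G => L ⟨0, ht⟩ ⊓ T)
      {T : Subgroup G |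
        (T < N ∧ N ⊓ K ≤ T ∧ ∀ k ∈ K, ∀ x ∈ T, k * x * k⁻¹ ∈ T) ∧
        ∀ T' : Subgroup G,
          (T' < N ∧ N ⊓ K ≤ T' ∧ ∀ k ∈ K, ∀ x ∈ T', k * x * k⁻¹ ∈ T') →
          T ≤ T' → T' = T}
      {M : Subgroup G |
        (M < L ⟨0, ht⟩ ∧ L ⟨0, ht⟩ ⊓ K ≤ M ∧
          ∀ k ∈ K, (L ⟨0, ht⟩).map (MulAut.conj k).toMonoidHom = L ⟨0, ht⟩ →
            ∀ x ∈ M, k * x * k⁻¹ ∈ M) ∧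
        ∀ M' : Subgroup G,
          (M' < L ⟨0, ht⟩ ∧ L ⟨0, ht⟩ ⊓ K ≤ M' ∧
            ∀ k ∈ K, (L ⟨0, ht⟩).map (MulAut.conj k).toMonoidHom = L ⟨0, ht⟩ →
              ∀ x ∈ M', k * x * k⁻¹ ∈ M') →
          M ≤ M' → M' = M} := by
  subst hsup
  have := hsimple ⟨0, ht⟩
  -- `MulAut.conj k • H` unfolds to `H.map (MulAut.conj k).toMonoidHom`, so `hperm` and `htrans`
  -- can be passed as they are
  convert bijOn_inf_maximal_isProperInvariant hcommute hindep hperm (htrans ⟨0, ht⟩) hK1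
    using 1 <;> ext T
  · simp only [Set.mem_ofPred_eq, maximal_iff_forall_eq, isProperInvariant_iff]
  · simp only [Set.mem_ofPred_eq, maximal_iff_forall_eq, isProperInvariant_inf_normalizer_iff]
    rfl

/-- Lemma 3.4: let `G = NK` with `N = L₁ × ⋯ × L_t` normal (an internal direct product of
nonabelian simple subgroups), `K ≤ G` not containing `N`, `K` permuting the `Lᵢ`
transitively by conjugation, and `K₁ = L₁ ⊓ K ≠ 1`. Then `T ↦ L₁ ⊓ T` is a bijection from
the set of maximal `K`-invariant (proper) subgroups of `N` containing `N ⊓ K` to the set of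
maximal `N_K(L₁)`-invariant (proper) subgroups of `L₁` containing `K₁`. -/
theorem stmt_6 {G : Type*} [Group G] [Finite G] (N K : Subgroup G) [N.Normal]
    (hG : N ⊔ K = ⊤) (hNK : ¬ N ≤ K)
    (t : ℕ) (ht : 0 < t) (L : Fin t → Subgroup G)
    (hsup : (⨆ i, L i) = N)
    (hindep : ∀ i : Fin t, L i ⊓ (⨆ j : Fin t, ⨆ _ : j ≠ i, L j) = ⊥)
    (hcommute : ∀ i j : Fin t, i ≠ j → ∀ x ∈ L i, ∀ y ∈ L j, x * y = y * x)
    (hsimple : ∀ i, IsSimpleGroup ↥(L i))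
    (hnonab : ∀ i, ∃ a b : ↥(L i), a * b ≠ b * a)
    (hperm : ∀ k ∈ K, ∀ i : Fin t, ∃ j : Fin t,
        (L i).map (MulAut.conj k).toMonoidHom = L j)
    (htrans : ∀ i j : Fin t, ∃ k ∈ K,
        (L i).map (MulAut.conj k).toMonoidHom = L j)
    (hK1 : L ⟨0, ht⟩ ⊓ K ≠ ⊥) :
    Set.BijOn (fun T : Subgroup G => L ⟨0, ht⟩ ⊓ T)
      {T : Subgroup G |
        (T < N ∧ N ⊓ K ≤ T ∧ ∀ k ∈ K, ∀ x ∈ T, k * x * k⁻¹ ∈ T) ∧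
        ∀ T' : Subgroup G,
          (T' < N ∧ N ⊓ K ≤ T' ∧ ∀ k ∈ K, ∀ x ∈ T', k * x * k⁻¹ ∈ T') →
          T ≤ T' → T' = T}
      {M : Subgroup G |
        (M < L ⟨0, ht⟩ ∧ L ⟨0, ht⟩ ⊓ K ≤ M ∧
          ∀ k ∈ K, (L ⟨0, ht⟩).map (MulAut.conj k).toMonoidHom = L ⟨0, ht⟩ →
            ∀ x ∈ M, k * x * k⁻¹ ∈ M) ∧
        ∀ M' : Subgroup G,
          (M' < L ⟨0, ht⟩ ∧ L ⟨0, ht⟩ ⊓ K ≤ M' ∧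
            ∀ k ∈ K, (L ⟨0, ht⟩).map (MulAut.conj k).toMonoidHom = L ⟨0, ht⟩ →
              ∀ x ∈ M', k * x * k⁻¹ ∈ M') →
          M ≤ M' → M' = M} :=
  stmt_6_general N K t ht L hsup hindep hcommute hsimple hperm htrans hK1
end

section
/- Let G be a finite group and π a set of primes such that O_π(G) = 1. Then O_π(G/Φ(G)) = 1. -/
/-!
Let `K/Φ(G)` be a normal π-subgroup of `G/Φ(G)`. Every Sylow subgroup `P` of `Φ(G)` is normal in
`G`: the Frattini argument gives `G = N_G(P) Φ(G)`, and `Φ(G)` consists of non-generators. Hence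
`O_π(G) = 1` forces `Φ(G)` to be a π'-group, a normal Hall subgroup of `K`, and Schur–Zassenhaus
gives a complement `C ≅ K/Φ(G)`. If the complements are conjugate under `Φ(G)`, the Frattini
argument again gives `G = N_G(C) Φ(G) = N_G(C)`, so `C` is a normal π-subgroup, `C = 1` and
`K = Φ(G)`.

Conjugacy of complements is proved here only for an abelian normal subgroup (through the `diff`
transfer on transversals), so `Φ(G)` is removed one abelian normal layer `Z` at a time, the centre
of a Sylow subgroup, using `Φ(G)/Z ≤ Φ(G/Z)`.
-/

open Subgroup MulAction Pointwise

-- Meant for finite `α`: an infinite type has `Nat.card α = 0`, which every prime divides.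
def IsPiGroup (π : Set ℕ) (α : Type*) : Prop :=
  ∀ p : ℕ, p.Prime → p ∣ Nat.card α → p ∈ π

def HasTrivialPiCore (π : Set ℕ) (G : Type*) [Group G] : Prop :=
  ∀ H : Subgroup G, H.Normal → IsPiGroup π H → H = ⊥

section

variable {π : Set ℕ} {G : Type*} [Group G]

namespace IsPiGroup

variable {α β : Type*}

theorem of_card_dvd (hβ : IsPiGroup π β) (hdvd : Nat.card α ∣ Nat.card β) : IsPiGroup π α :=
  fun p hp hpα => hβ p hp (hpα.trans hdvd)

theorem coprime_card (hα : IsPiGroup π α) (hβ : IsPiGroup πᶜ β) :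
    (Nat.card α).Coprime (Nat.card β) :=
  Nat.coprime_of_dvd fun p hp hpα hpβ => hβ p hp hpβ (hα p hp hpα)

end IsPiGroup

theorem IsPGroup.isPiGroup {p : ℕ} [Fact p.Prime] {P : Type*} [Group P] [Finite P]
    (hP : IsPGroup p P) (hp : p ∈ π) : IsPiGroup π P := by
  intro q hq hdvd
  obtain ⟨n, hn⟩ := IsPGroup.iff_card.mp hP
  rw [hn] at hdvd
  rwa [(Nat.prime_dvd_prime_iff_eq hq Fact.out).mp (hq.dvd_of_dvd_pow hdvd)]

namespace Subgroup

theorem card_map_mk' (Z H : Subgroup G) [Z.Normal] :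
    Nat.card (H.map (QuotientGroup.mk' Z)) = Z.relIndex H := by
  rw [← relIndex_ker, QuotientGroup.ker_mk']

variable [Finite G] {H K K₁ K₂ : Subgroup G} [IsMulCommutative H]

noncomputable def IsComplement'.toQuotientDiff (hK : IsComplement' H K) : H.QuotientDiff :=
  Quotient.mk'' ⟨K, hK.symm⟩

variable [H.Normal]

theorem IsComplement'.stabilizer_toQuotientDiff (hcop : (Nat.card H).Coprime H.index)
    (hK : IsComplement' H K) : stabilizer G hK.toQuotientDiff = K := by
  refine (eq_of_le_of_card_ge (fun k hk => ?_) ?_).symm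
  · exact congrArg Quotient.mk'' (Subtype.ext (op_smul_coe_set (inv_mem hk)))
  · rw [← hK.symm.index_eq_card, (isComplement'_stabilizer_of_coprime hcop).symm.index_eq_card]

theorem IsComplement'.exists_conj_smul_eq (hcop : (Nat.card H).Coprime H.index)
    (h₁ : IsComplement' H K₁) (h₂ : IsComplement' H K₂) :
    ∃ h : H, MulAut.conj (h : G) • K₁ = K₂ := by
  obtain ⟨h, hh⟩ := exists_smul_eq hcop h₁.toQuotientDiff h₂.toQuotientDiff
  refine ⟨h, ?_⟩
  rw [← h₁.stabilizer_toQuotientDiff hcop, ← h₂.stabilizer_toQuotientDiff hcop, ← hh,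
    pointwise_smul_def]
  exact (stabilizer_smul_eq_stabilizer_map_conj (h : G) _).symm

theorem IsComplement'.normalizer_map_subtype_sup_eq_top {N K : Subgroup G} [N.Normal]
    [K.Normal] [IsMulCommutative N]
    (hcop : (Nat.card (N.subgroupOf K)).Coprime (N.subgroupOf K).index) {C : Subgroup K}
    (hC : IsComplement' (N.subgroupOf K) C) :
    normalizer (C.map K.subtype) ⊔ N = ⊤ := by
  refine top_le_iff.mp fun g _ => ?_
  have hcard : Nat.card ↥((MulAut.conjNormal g : MulAut K) • C) = Nat.card C := by
    rw [pointwise_smul_def]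
    exact card_map_of_injective (MulAut.conjNormal g).injective
  have hgC : IsComplement' (N.subgroupOf K) ((MulAut.conjNormal g : MulAut K) • C) := by
    refine isComplement'_of_coprime ?_ ?_ <;> rw [hcard]
    · exact hC.card_mul_card
    · rwa [← hC.symm.index_eq_card]
  obtain ⟨n, hn⟩ := hC.exists_conj_smul_eq hcop hgC
  rw [← MulAut.conjNormal_val] at hn
  rw [← mul_inv_cancel_left ((n : K) : G) g, sup_comm]
  refine mul_mem_sup (mem_subgroupOf.mp n.2) (mem_normalizer_iff_map_conj_eq.mpr ?_)
  have hfix : (MulAut.conjNormal (((n : K) : G)⁻¹ * g) : MulAut K) • C = C := by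
    rw [map_mul, mul_smul, ← hn, ← mul_smul, ← map_mul, inv_mul_cancel, map_one, one_smul]
  calc (C.map K.subtype).map (MulAut.conj (((n : K) : G)⁻¹ * g))
      = (C.map (MulAut.conjNormal (((n : K) : G)⁻¹ * g) : MulAut K).toMonoidHom).map
          K.subtype := by
        rw [map_map, map_map]
        rfl
    _ = C.map K.subtype := congrArg (map K.subtype) hfix

end Subgroup

theorem Sylow.normal_map_subtype_of_le_frattini [Finite G] {p : ℕ} [Fact p.Prime]
    {N : Subgroup G} [N.Normal] (hN : N ≤ frattini G) (P : Sylow p N) :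
    ((P : Subgroup N).map N.subtype).Normal :=
  normalizer_eq_top_iff.mp <| frattini_nongenerating <| top_le_iff.mp <|
    P.normalizer_sup_eq_top.ge.trans (sup_le_sup_left hN _)

theorem exists_isMulCommutative_normal_le_of_le_frattini [Finite G] {N : Subgroup G} [N.Normal]
    (hN : N ≤ frattini G) (hN₁ : N ≠ ⊥) :
    ∃ Z : Subgroup G, Z.Normal ∧ IsMulCommutative Z ∧ Z ≤ N ∧ Z ≠ ⊥ := by
  have hp : (Nat.card N).minFac.Prime := Nat.minFac_prime (mt card_eq_one.mp hN₁)
  have := Fact.mk hp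
  obtain ⟨P⟩ : Nonempty (Sylow (Nat.card N).minFac N) := inferInstance
  set P' := (P : Subgroup N).map N.subtype
  have : P'.Normal := P.normal_map_subtype_of_le_frattini hN
  have : Nontrivial P' := (nontrivial_iff_ne_bot _).mpr <|
    (map_eq_bot_iff_of_injective _ N.subtype_injective).not.mpr
      (P.ne_bot_of_dvd_card (Nat.minFac_dvd _))
  have : Nontrivial (center P') := (P.2.map N.subtype).center_nontrivial
  refine ⟨(center P').map P'.subtype, inferInstance, inferInstance,
    (map_subtype_le _).trans (map_subtype_le _), ?_⟩
  exact (map_eq_bot_iff_of_injective _ P'.subtype_injective).not.mpr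
    ((nontrivial_iff_ne_bot _).mp ‹_›)

theorem HasTrivialPiCore.isPiGroup_compl_frattini [Finite G] (h : HasTrivialPiCore π G) :
    IsPiGroup πᶜ (frattini G) := by
  intro p hp hdvd hpπ
  have := Fact.mk hp
  obtain ⟨P⟩ : Nonempty (Sylow p (frattini G)) := inferInstance
  have hP := h _ (P.normal_map_subtype_of_le_frattini le_rfl) ((P.2.map _).isPiGroup hpπ)
  exact P.ne_bot_of_dvd_card hdvd ((map_eq_bot_iff_of_injective _ (subtype_injective _)).mp hP)

theorem exists_normal_card_eq_of_le_frattini_of_isMulCommutative [Finite G] {Z : Subgroup G}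
    [Z.Normal] [IsMulCommutative Z] (hZ : Z ≤ frattini G) (M : Subgroup (G ⧸ Z)) [M.Normal]
    (hcop : (Nat.card Z).Coprime (Nat.card M)) :
    ∃ C : Subgroup G, C.Normal ∧ Nat.card C = Nat.card M := by
  set K := M.comap (QuotientGroup.mk' Z)
  have hZK : Z ≤ K := QuotientGroup.ker_mk' Z ▸ MonoidHom.ker_le_comap _ _
  have hindex : (Z.subgroupOf K).index = Nat.card M := by
    rw [← relIndex, ← card_map_mk',
      map_comap_eq_self_of_surjective (QuotientGroup.mk'_surjective Z)]
  have hcard : Nat.card (Z.subgroupOf K) = Nat.card Z :=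
    Nat.card_congr (subgroupOfEquivOfLe hZK).toEquiv
  rw [← hcard, ← hindex] at hcop
  obtain ⟨C, hC⟩ := exists_right_complement'_of_coprime hcop
  refine ⟨C.map K.subtype, normalizer_eq_top_iff.mp (frattini_nongenerating ?_), ?_⟩
  · exact top_le_iff.mp <|
      (hC.normalizer_map_subtype_sup_eq_top hcop).ge.trans (sup_le_sup_left hZ _)
  · rw [card_subtype, ← hindex, hC.symm.index_eq_card]

theorem exists_normal_card_eq_of_le_frattini [Finite G] {N : Subgroup G} [N.Normal]
    (hN : N ≤ frattini G) (M : Subgroup (G ⧸ N)) [M.Normal]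
    (hcop : (Nat.card N).Coprime (Nat.card M)) :
    ∃ C : Subgroup G, C.Normal ∧ Nat.card C = Nat.card M := by
  induction hn : Nat.card N using Nat.strong_induction_on generalizing G with
  | _ n ih =>
  subst hn
  by_cases hN₁ : N = ⊥
  · subst hN₁
    exact exists_normal_card_eq_of_le_frattini_of_isMulCommutative hN M hcop
  obtain ⟨Z, hZnormal, hZcomm, hZN, hZ₁⟩ :=
    exists_isMulCommutative_normal_le_of_le_frattini hN hN₁
  set N' := N.map (QuotientGroup.mk' Z)
  have hN' : N' ≤ frattini (G ⧸ Z) := map_le_iff_le_comap.mpr <|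
    hN.trans (frattini_le_comap_frattini_of_surjective (QuotientGroup.mk'_surjective Z))
  have hcardN : Nat.card Z * Nat.card N' = Nat.card N := by
    rw [card_map_mk', ← relIndex_bot_left, ← relIndex_bot_left,
      relIndex_mul_relIndex _ _ _ bot_le hZN]
  have hZcard : 1 < Nat.card Z :=
    Finite.one_lt_card_iff_nontrivial.mpr ((nontrivial_iff_ne_bot _).mpr hZ₁)
  let e := QuotientGroup.quotientQuotientEquivQuotient Z N hZN
  set M' := M.map e.symm.toMonoidHom
  have : M'.Normal := ‹M.Normal›.map _ e.symm.surjective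
  have hM' : Nat.card M' = Nat.card M := card_map_of_injective e.symm.injective
  have hlt : Nat.card N' < Nat.card N :=
    hcardN ▸ (Nat.lt_mul_iff_one_lt_left Nat.card_pos).mpr hZcard
  obtain ⟨C₁, hC₁, hC₁card⟩ := ih _ hlt hN' M'
    (hM' ▸ hcop.coprime_dvd_left (Dvd.intro_left _ hcardN)) rfl
  obtain ⟨C, hC, hCcard⟩ := exists_normal_card_eq_of_le_frattini_of_isMulCommutative
    (hZN.trans hN) C₁ (hC₁card ▸ hM' ▸ hcop.coprime_dvd_left (Dvd.intro _ hcardN))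
  exact ⟨C, hC, hCcard.trans (hC₁card.trans hM')⟩

end

/-- Lemma 3.6: if `G` is a finite group and `π` a set of primes with `O_π(G) = 1`
(i.e. every normal `π`-subgroup of `G` is trivial), then `O_π(G/Φ(G)) = 1`. -/
theorem stmt_7 {G : Type*} [Group G] [Finite G] (π : Set ℕ)
    (h : ∀ H : Subgroup G, H.Normal →
        (∀ p : ℕ, p.Prime → p ∣ Nat.card H → p ∈ π) → H = ⊥) :
    ∀ H : Subgroup (G ⧸ frattini G), H.Normal →
        (∀ p : ℕ, p.Prime → p ∣ Nat.card H → p ∈ π) → H = ⊥ := by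
  intro M hM hMπ
  obtain ⟨C, hC, hcard⟩ := exists_normal_card_eq_of_le_frattini le_rfl M
    (IsPiGroup.coprime_card hMπ (HasTrivialPiCore.isPiGroup_compl_frattini h)).symm
  rw [← card_eq_one, ← hcard, h C hC (IsPiGroup.of_card_dvd hMπ hcard.dvd), card_bot]
end

section
/- Let G be a finite group and r a prime divisor of |G|. Let D be the subgroup of G containing O_r(G) such that D/O_r(G) = Φ(G/O_r(G)). Then D equals the intersection of all maximal subgroups of G whose index is coprime to r. -/
/-!
Write `D` for the intersection of the maximal subgroups of `r'`-index; it is characteristic. A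
normal `r`-subgroup lies in every Sylow `r`-subgroup, hence in every subgroup of `r'`-index, so
`O_r(G) ≤ D`. If a maximal subgroup `M` does not contain the normal subgroup `D`, then `G = MD`
and `[G : M] = [D : M ∩ D]`; so if `M` contains some `K ≤ D` with `[D : K]` prime to `r`, then `M`
has `r'`-index and contains `D` after all. Applied to the normalizer of a Sylow `r`-subgroup `P`
of `D`, which supplements `D` by the Frattini argument, this shows that `P` is normal in `G`, so
`P ≤ O_r(G)` and `[D : O_r(G)]` is prime to `r`. Applied to `O_r(G)`, it shows that `D` lies in
every maximal subgroup containing `O_r(G)`, i.e. `D ≤ Φ(G/O_r(G))`, and the converse inclusion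
holds because every maximal subgroup of `r'`-index contains `O_r(G)`.
-/

open Subgroup

namespace Subgroup

variable {G : Type*} [Group G]

theorem index_eq_relIndex_of_sup_eq_top {M X : Subgroup G} [X.Normal] [X.FiniteIndex]
    (h : M ⊔ X = ⊤) : M.index = M.relIndex X := by
  have hX : X.index ≠ 0 := FiniteIndex.index_ne_zero
  have hXM : X.index = X.relIndex M := by
    rw [← relIndex_sup_right M X, h, relIndex_top_right]
  refine Nat.eq_of_mul_eq_mul_right (Nat.pos_of_ne_zero hX) ?_
  calc M.index * X.index = (M ⊓ X).index := by
        rw [hXM, ← inf_relIndex_left, mul_comm, relIndex_mul_index inf_le_left]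
    _ = M.relIndex X * X.index := by
        rw [← inf_relIndex_right, relIndex_mul_index inf_le_right]

theorem index_dvd_relIndex_of_isCoatom {M X K : Subgroup G} [X.Normal] [X.FiniteIndex]
    (hM : IsCoatom M) (hXM : ¬ X ≤ M) (hKM : K ≤ M) (hKX : K ≤ X) :
    M.index ∣ K.relIndex X := by
  rw [index_eq_relIndex_of_sup_eq_top (hM.2 _ (left_lt_sup.mpr hXM)), ← inf_relIndex_right]
  exact relIndex_dvd_of_le_left X (le_inf hKM hKX)

theorem comap_frattini_eq_sInf {Q : Type*} [Group Q] {φ : G →* Q}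
    (hφ : Function.Surjective φ) :
    (frattini Q).comap φ = sInf {H : Subgroup G | IsCoatom H ∧ φ.ker ≤ H} := by
  refine le_antisymm (le_sInf fun H ⟨hH, hker⟩ => ?_) ?_
  · have hmap : IsCoatom (H.map φ) := by
      refine ⟨fun htop => hH.1 ?_, fun K hK => ?_⟩
      · rw [← comap_map_eq_self hker, htop, comap_top]
      · have hlt := (comap_lt_comap_of_surjective hφ).mpr hK
        rw [comap_map_eq_self hker] at hlt
        have := hH.2 _ hlt
        rw [← map_comap_eq_self_of_surjective hφ K, this, map_top_of_surjective _ hφ]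
    calc (frattini Q).comap φ ≤ (H.map φ).comap φ := comap_mono (frattini_le_coatom hmap)
      _ = H := comap_map_eq_self hker
  · simp only [frattini, Order.radical, comap_iInf, le_iInf_iff]
    exact fun M hM => sInf_le ⟨isCoatom_comap_of_surjective hφ hM, ker_le_comap φ M⟩

theorem relIndex_map_subtype {D : Subgroup G} (P : Subgroup D) :
    (P.map D.subtype).relIndex D = P.index := by
  rw [relIndex, subgroupOf, comap_map_eq_self_of_injective D.subtype_injective]

end Subgroup

theorem IsPGroup.le_of_not_dvd_index {G : Type*} [Group G] [Finite G] {p : ℕ} [Fact p.Prime]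
    {O : Subgroup G} [O.Normal] (hO : IsPGroup p O) {H : Subgroup G} (hH : ¬ p ∣ H.index) :
    O ≤ H := by
  obtain ⟨T⟩ : Nonempty (Sylow p H) := Sylow.nonempty
  have hT : ¬ p ∣ (T.map H.subtype).index := by
    rw [index_map_subtype]
    exact (Fact.out : p.Prime).not_dvd_mul T.not_dvd_index hH
  calc O ≤ (T.2.map H.subtype).toSylow hT := hO.le_sylow_of_normal _
    _ ≤ H := map_subtype_le _

def notDvdIndexFrattini (r : ℕ) (G : Type*) [Group G] : Subgroup G :=
  sInf {H : Subgroup G | IsCoatom H ∧ ¬ r ∣ H.index}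

section NotDvdIndexFrattini

variable {G : Type*} [Group G] {r : ℕ}

instance notDvdIndexFrattini_characteristic : (notDvdIndexFrattini r G).Characteristic := by
  refine characteristic_iff_le_comap.mpr fun ϕ => ?_
  rw [← map_le_iff_le_comap]
  refine le_sInf fun H hH => map_le_iff_le_comap.mpr (sInf_le ⟨(isCoatom_comap ϕ).mpr hH.1, ?_⟩)
  exact (index_comap_of_surjective H (f := ϕ.toMonoidHom) ϕ.surjective).symm ▸ hH.2

variable [Finite G]

theorem notDvdIndexFrattini_le_of_isCoatom {M K : Subgroup G} (hM : IsCoatom M) (hKM : K ≤ M)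
    (hKD : K ≤ notDvdIndexFrattini r G) (hK : ¬ r ∣ K.relIndex (notDvdIndexFrattini r G)) :
    notDvdIndexFrattini r G ≤ M := by
  by_contra hDM
  exact hDM (sInf_le ⟨hM, fun h => hK (h.trans (index_dvd_relIndex_of_isCoatom hM hDM hKM hKD))⟩)

variable [Fact r.Prime]

theorem IsPGroup.le_notDvdIndexFrattini {O : Subgroup G} [O.Normal] (hO : IsPGroup r O) :
    O ≤ notDvdIndexFrattini r G :=
  le_sInf fun _ hH => hO.le_of_not_dvd_index hH.2

theorem Sylow.normal_map_subtype_notDvdIndexFrattini (P : Sylow r (notDvdIndexFrattini r G)) :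
    ((P : Subgroup (notDvdIndexFrattini r G)).map (notDvdIndexFrattini r G).subtype).Normal := by
  rw [← normalizer_eq_top_iff]
  by_contra hN
  obtain ⟨M, hM, hNM⟩ := (eq_top_or_exists_le_coatom _).resolve_left hN
  have hDM : notDvdIndexFrattini r G ≤ M :=
    notDvdIndexFrattini_le_of_isCoatom hM (le_normalizer.trans hNM) (map_subtype_le _)
      (relIndex_map_subtype P.toSubgroup ▸ P.not_dvd_index)
  exact hM.1 (top_le_iff.mp ((Sylow.normalizer_sup_eq_top P).ge.trans (sup_le hNM hDM)))

theorem not_dvd_relIndex_notDvdIndexFrattini {O : Subgroup G}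
    (hOmax : ∀ P : Subgroup G, P.Normal → IsPGroup r P → P ≤ O) :
    ¬ r ∣ O.relIndex (notDvdIndexFrattini r G) := by
  obtain ⟨P⟩ : Nonempty (Sylow r (notDvdIndexFrattini r G)) := Sylow.nonempty
  have hPO := hOmax _ P.normal_map_subtype_notDvdIndexFrattini (P.2.map _)
  exact fun h => P.not_dvd_index (relIndex_map_subtype P.toSubgroup ▸
    h.trans (relIndex_dvd_of_le_left _ hPO))

end NotDvdIndexFrattini

theorem stmt_8_general {G : Type*} [Group G] [Finite G] (r : ℕ) (hr : r.Prime)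
    (O : Subgroup G) [O.Normal] (hO : IsPGroup r ↥O)
    (hOmax : ∀ P : Subgroup G, P.Normal → IsPGroup r ↥P → P ≤ O) :
    (frattini (G ⧸ O)).comap (QuotientGroup.mk' O) =
      sInf {H : Subgroup G | IsCoatom H ∧ ¬ r ∣ H.index} := by
  have : Fact r.Prime := ⟨hr⟩
  rw [comap_frattini_eq_sInf (QuotientGroup.mk'_surjective O), QuotientGroup.ker_mk']
  refine le_antisymm (sInf_le_sInf fun H hH => ⟨hH.1, hO.le_of_not_dvd_index hH.2⟩) ?_
  exact le_sInf fun M ⟨hM, hOM⟩ => notDvdIndexFrattini_le_of_isCoatom hM hOM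
    hO.le_notDvdIndexFrattini (not_dvd_relIndex_notDvdIndexFrattini hOmax)

/-- Theorem 3.7(ii): let `G` be a finite group, `r` a prime divisor of `|G|`, and let
`O = O_r(G)` be the largest normal `r`-subgroup of `G`. Then the preimage `D` in `G` of
`Φ(G/O_r(G))` equals the intersection of all maximal subgroups of `G` of `r'`-index. -/
theorem stmt_8 {G : Type*} [Group G] [Finite G] (r : ℕ) (hr : r.Prime)
    (hdvd : r ∣ Nat.card G)
    (O : Subgroup G) [O.Normal] (hO : IsPGroup r ↥O)
    (hOmax : ∀ P : Subgroup G, P.Normal → IsPGroup r ↥P → P ≤ O) :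
    (frattini (G ⧸ O)).comap (QuotientGroup.mk' O) =
      sInf {H : Subgroup G | IsCoatom H ∧ ¬ r ∣ H.index} :=
  stmt_8_general r hr O hO hOmax
end

section
/- Let G be an almost simple group with socle T and let R be a Sylow r-subgroup of G with R ∩ T ≠ 1. Then there exists a maximal subgroup H of G containing R such that H is core-free (T ⊄ H) and N_G(R) ≤ H. -/
/-!
`R₀ = R ∩ T` is a Sylow `r`-subgroup of `T`, so the Frattini argument gives `G = N_G(R₀) T`.
Since `T` is simple and nonabelian, it is not an `r`-group, so the nontrivial `r`-subgroup
`R₀` of `T` is not normal in `T`, let alone in `G`: `N_G(R₀)` is proper. Any maximal subgroup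
`H ⊇ N_G(R₀) ⊇ N_G(R) ⊇ R` then works, and `T ≤ H` would force `H ⊇ N_G(R₀) T = G`.
-/

open Subgroup

namespace Subgroup

variable {G : Type*} [Group G] [Finite G]

theorem relIndex_eq_relIndex_sup_of_normal (H K : Subgroup G) [K.Normal] :
    H.relIndex K = H.relIndex (H ⊔ K) := by
  have hK : K ⊓ (H ⊔ K) = K := inf_eq_left.mpr le_sup_right
  have h : H.relIndex K * (H ⊓ K).relIndex H = H.relIndex (H ⊔ K) * (H ⊓ K).relIndex H :=
    calc H.relIndex K * (H ⊓ K).relIndex H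
        = H.relIndex (K ⊓ (H ⊔ K)) * K.relIndex (H ⊔ K) := by
          rw [hK, relIndex_sup_right, inf_relIndex_left]
      _ = (H ⊓ K).relIndex (H ⊔ K) := relIndex_inf_mul_relIndex H K _
      _ = H.relIndex (H ⊔ K) * (H ⊓ K).relIndex H := by
          rw [← relIndex_mul_relIndex _ _ _ inf_le_left le_sup_left, mul_comm]
  exact Nat.eq_of_mul_eq_mul_right (Nat.pos_of_ne_zero index_ne_zero_of_finite) h

theorem relIndex_dvd_index_of_normal_right (H K : Subgroup G) [K.Normal] :
    H.relIndex K ∣ H.index :=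
  relIndex_eq_relIndex_sup_of_normal H K ▸ relIndex_dvd_index_of_le le_sup_left

end Subgroup

theorem Subgroup.normalizer_le_normalizer_inf_of_normal {G : Type*} [Group G]
    (H N : Subgroup G) [N.Normal] :
    normalizer (H : Set G) ≤ normalizer ((H ⊓ N : Subgroup G) : Set G) :=
  (le_inf le_rfl le_normalizer_of_normal).trans inf_normalizer_le_normalizer_inf

theorem IsPGroup.mul_comm_of_isSimpleGroup {p : ℕ} [Fact p.Prime] {G : Type*} [Group G] [Finite G]
    [IsSimpleGroup G] (hG : IsPGroup p G) (a b : G) : a * b = b * a := by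
  have hcenter : center G = ⊤ :=
    (IsSimpleGroup.eq_bot_or_eq_top_of_normal _ inferInstance).resolve_left
      ((nontrivial_iff_ne_bot _).mp hG.center_nontrivial)
  exact mem_center_iff.mp (hcenter ▸ mem_top a) b |>.symm

theorem IsPGroup.not_normal_of_le_isSimpleGroup {p : ℕ} [Fact p.Prime] {G : Type*} [Group G]
    [Finite G] {N Q : Subgroup G} [IsSimpleGroup N] (hnonab : ∃ a b : N, a * b ≠ b * a)
    (hQ : IsPGroup p Q) (hQN : Q ≤ N) (hQ_ne : Q ≠ ⊥) : ¬ Q.Normal := by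
  intro hnormal
  rcases IsSimpleGroup.eq_bot_or_eq_top_of_normal _ (hnormal.subgroupOf N) with hbot | htop
  · exact hQ_ne (by rwa [subgroupOf_eq_bot, disjoint_of_le_iff_left_eq_bot hQN] at hbot)
  · obtain ⟨a, b, hab⟩ := hnonab
    exact hab ((hQ.to_le (subgroupOf_eq_top.mp htop)).mul_comm_of_isSimpleGroup a b)

namespace Sylow

variable {p : ℕ} [Fact p.Prime] {G : Type*} [Group G] [Finite G]

noncomputable def subgroupOfNormal (P : Sylow p G) (N : Subgroup G) [N.Normal] : Sylow p N :=
  IsPGroup.toSylow (P := (P : Subgroup G).subgroupOf N) (P.isPGroup'.comap_subtype (K := N))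
    fun h ↦ P.not_dvd_index (h.trans (relIndex_dvd_index_of_normal_right (P : Subgroup G) N))

theorem normalizer_inf_sup_eq_top (P : Sylow p G) (N : Subgroup G) [N.Normal] :
    normalizer (((P : Subgroup G) ⊓ N : Subgroup G) : Set G) ⊔ N = ⊤ := by
  rw [← subgroupOf_map_subtype]
  exact normalizer_sup_eq_top (P.subgroupOfNormal N)

end Sylow

theorem stmt_13_general {G : Type*} [Group G] [Finite G] (T : Subgroup G) [T.Normal]
    (hsimple : IsSimpleGroup ↥T) (hnonab : ∃ a b : ↥T, a * b ≠ b * a)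
    {r : ℕ} (hr : r.Prime) (R : Sylow r G)
    (hRT : (R : Subgroup G) ⊓ T ≠ ⊥) :
    ∃ H : Subgroup G, IsCoatom H ∧ (R : Subgroup G) ≤ H ∧ ¬ T ≤ H ∧
      Subgroup.normalizer ((R : Subgroup G) : Set G) ≤ H := by
  have : Fact r.Prime := ⟨hr⟩
  have hfrattini := R.normalizer_inf_sup_eq_top T
  have hRR₀ := normalizer_le_normalizer_inf_of_normal (R : Subgroup G) T
  have hproper : normalizer (((R : Subgroup G) ⊓ T : Subgroup G) : Set G) ≠ ⊤ := fun htop ↦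
    R.2.to_inf_left.not_normal_of_le_isSimpleGroup hnonab inf_le_right hRT
      (normalizer_eq_top_iff.mp htop)
  obtain ⟨H, hH, hle⟩ := (eq_top_or_exists_le_coatom _).resolve_left hproper
  refine ⟨H, hH, le_normalizer.trans (hRR₀.trans hle), fun hTH ↦ ?_, hRR₀.trans hle⟩
  exact hH.1 (top_le_iff.mp (hfrattini ▸ sup_le hle hTH))

/-- Lemma 2.3: let `G` be an almost simple group with socle `T` and let `R` be a Sylow
`r`-subgroup of `G` with `R ⊓ T ≠ 1`. Then there is a maximal subgroup `H` of `G`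
containing `R` which is core-free (i.e. `T ⊄ H`, equivalently the normal core of `H` is
trivial) and satisfies `N_G(R) ≤ H`. -/
theorem stmt_13 {G : Type*} [Group G] [Finite G] (T : Subgroup G) [T.Normal]
    (hsimple : IsSimpleGroup ↥T) (hnonab : ∃ a b : ↥T, a * b ≠ b * a)
    (hcent : Subgroup.centralizer (T : Set G) = ⊥)
    {r : ℕ} (hr : r.Prime) (R : Sylow r G)
    (hRT : (R : Subgroup G) ⊓ T ≠ ⊥) :
    ∃ H : Subgroup G, IsCoatom H ∧ (R : Subgroup G) ≤ H ∧ ¬ T ≤ H ∧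
      Subgroup.normalizer ((R : Subgroup G) : Set G) ≤ H :=
  stmt_13_general T hsimple hnonab hr R hRT
end

section
/- Let G be a finite group, T a normal subgroup with G = RT for a Sylow r-subgroup R of G, and suppose H = N_G(R₀) is the unique maximal subgroup of G containing R, where R₀ = R ∩ T. Then the following are equivalent: (i) N_G(R₀) = N_G(R); (ii) G = O_r(H)T; (iii) [R, H ∩ T] ≤ R₀. -/
/-!
All three conditions are equivalent to `H ≤ N_G(R)`. Since `R ≤ H` and `G = RT`, Dedekind's law
gives `H = R(H ∩ T)`, so `H ≤ N_G(R)` amounts to `H ∩ T ≤ N_G(R)`, i.e. `[R, H ∩ T] ≤ R`, and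
`[R, H ∩ T] ≤ T` holds anyway. If `H` normalizes `R`, then `R ≤ O_r(H)` and `G = O_r(H)T`.
Conversely `O_r(H)` is normalized by `R`, hence lies in `R` by maximality, and if
`G = O_r(H)T` then `R = O_r(H)R₀` is generated by two subgroups normalized by `H`.
-/

/-- The `r`-core `O_r(H)` of a subgroup `H` of `G`, viewed as a subgroup of `G`: the join of
all `r`-subgroups of `H` that are normal in `H` (for finite `H` this is the largest normal
`r`-subgroup of `H`). -/
def pCoreIn (r : ℕ) {G : Type*} [Group G] (H : Subgroup G) : Subgroup G :=
  ⨆ P ∈ {P : Subgroup G |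
      P ≤ H ∧ IsPGroup r ↥P ∧ ∀ h ∈ H, ∀ p ∈ P, h * p * h⁻¹ ∈ P}, P

namespace Subgroup

variable {G : Type*} [Group G]

theorem inf_sup_normal_le_sup_inf {A C : Subgroup G} (T : Subgroup G) [T.Normal] (hAC : A ≤ C) :
    C ⊓ (A ⊔ T) ≤ A ⊔ (C ⊓ T) := by
  intro g hg
  obtain ⟨hgC, hg⟩ := mem_inf.mp hg
  replace hg : g ∈ ((A ⊔ T : Subgroup G) : Set G) := hg
  rw [mul_normal] at hg
  obtain ⟨a, ha, t, ht, rfl⟩ := hg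
  have htC : t ∈ C := by simpa using C.mul_mem (C.inv_mem (hAC ha)) hgC
  exact mul_mem_sup ha ⟨htC, ht⟩

theorem normalizer_le_normalizer_inf_normal (A T : Subgroup G) [T.Normal] :
    normalizer (A : Set G) ≤ normalizer ((A ⊓ T : Subgroup G) : Set G) :=
  (le_inf le_rfl le_normalizer_of_normal).trans inf_normalizer_le_normalizer_inf

theorem le_normalizer_iff_inf_le_normalizer {A H T : Subgroup G} [T.Normal] (hAH : A ≤ H)
    (hAT : A ⊔ T = ⊤) : H ≤ normalizer (A : Set G) ↔ H ⊓ T ≤ normalizer (A : Set G) := by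
  refine ⟨inf_le_left.trans, fun h => ?_⟩
  calc H = H ⊓ (A ⊔ T) := by rw [hAT, inf_top_eq]
    _ ≤ A ⊔ (H ⊓ T) := inf_sup_normal_le_sup_inf T hAH
    _ ≤ normalizer (A : Set G) := sup_le le_normalizer h

theorem commutator_le_inf_normal_iff {A B T : Subgroup G} [T.Normal] (hBT : B ≤ T) :
    ⁅A, B⁆ ≤ A ⊓ T ↔ B ≤ normalizer (A : Set G) := by
  have hT : ⁅A, B⁆ ≤ T := (commutator_mono le_rfl hBT).trans (commutator_le_right A T)
  rw [le_inf_iff, le_normalizer_iff_commutator_le_left]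
  exact and_iff_left hT

theorem le_normalizer_of_sup_normal_eq_top {A Q H T : Subgroup G} [T.Normal] (hQA : Q ≤ A)
    (hQT : Q ⊔ T = ⊤) (hHQ : H ≤ normalizer (Q : Set G))
    (hHA₀ : H ≤ normalizer ((A ⊓ T : Subgroup G) : Set G)) : H ≤ normalizer (A : Set G) := by
  have hA : A = Q ⊔ A ⊓ T := by
    refine le_antisymm ?_ (sup_le hQA inf_le_left)
    calc A = A ⊓ (Q ⊔ T) := by rw [hQT, inf_top_eq]
      _ ≤ Q ⊔ A ⊓ T := inf_sup_normal_le_sup_inf T hQA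
  rw [hA]
  exact (le_inf hHQ hHA₀).trans (normalizer_inf_normalizer_le_normalizer_sup _ _)

end Subgroup

open Subgroup

section pCoreIn

variable {G : Type*} [Group G] {r : ℕ} {H : Subgroup G}

theorem le_pCoreIn {P : Subgroup G} (hPH : P ≤ H) (hP : IsPGroup r P)
    (hHP : H ≤ normalizer (P : Set G)) : P ≤ pCoreIn r H :=
  le_iSup₂_of_le P ⟨hPH, hP, le_normalizer_iff.mp hHP⟩ le_rfl

theorem pCoreIn_le_of_sylow_le (R : Sylow r G) (hRH : (R : Subgroup G) ≤ H) :
    pCoreIn r H ≤ R :=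
  iSup₂_le fun P ⟨_, hP, hHP⟩ => by
    have hRP := IsPGroup.to_sup_of_normal_right' R.isPGroup' hP
      (hRH.trans (le_normalizer_iff.mpr hHP))
    exact le_sup_right.trans (R.is_maximal' hRP le_sup_left).le

theorem le_normalizer_pCoreIn : H ≤ normalizer (pCoreIn r H : Set G) := by
  rw [pCoreIn, iSup_subtype']
  exact (le_iInf fun P => le_normalizer_iff.mpr P.2.2.2).trans
    (iInf_normalizer_le_normalizer_iSup _)

end pCoreIn

theorem stmt_17_general {G : Type*} [Group G] {r : ℕ}
    (T : Subgroup G) [T.Normal] (R : Sylow r G)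
    (hG : (R : Subgroup G) ⊔ T = ⊤)
    (H : Subgroup G) (hHdef : H = Subgroup.normalizer (((R : Subgroup G) ⊓ T : Subgroup G) : Set G))
    (hRH : (R : Subgroup G) ≤ H) :
    ((Subgroup.normalizer (((R : Subgroup G) ⊓ T : Subgroup G) : Set G) = Subgroup.normalizer ((R : Subgroup G) : Set G)) ↔
        pCoreIn r H ⊔ T = ⊤) ∧
    ((pCoreIn r H ⊔ T = ⊤) ↔
        ⁅(R : Subgroup G), H ⊓ T⁆ ≤ (R : Subgroup G) ⊓ T) := by
  set S : Subgroup G := (R : Subgroup G)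
  have h_i : normalizer ((S ⊓ T : Subgroup G) : Set G) = normalizer (S : Set G) ↔
      H ≤ normalizer (S : Set G) := by
    rw [← hHdef]
    exact ⟨Eq.le, fun h => le_antisymm h (hHdef ▸ normalizer_le_normalizer_inf_normal S T)⟩
  have h_ii : pCoreIn r H ⊔ T = ⊤ ↔ H ≤ normalizer (S : Set G) := by
    refine ⟨fun hQT => ?_, fun h => top_le_iff.mp ?_⟩
    · exact le_normalizer_of_sup_normal_eq_top (pCoreIn_le_of_sylow_le R hRH) hQT
        le_normalizer_pCoreIn hHdef.le
    · exact hG ▸ sup_le_sup_right (le_pCoreIn hRH R.isPGroup' h) T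
  have h_iii : ⁅S, H ⊓ T⁆ ≤ S ⊓ T ↔ H ≤ normalizer (S : Set G) := by
    rw [commutator_le_inf_normal_iff inf_le_right, le_normalizer_iff_inf_le_normalizer hRH hG]
  exact ⟨h_i.trans h_ii.symm, h_ii.trans h_iii.symm⟩

/-- Lemma 8.1 (core equivalences): let `G` be a finite group with a normal subgroup `T` and
a Sylow `r`-subgroup `R` with `G = RT`, let `R₀ = R ⊓ T`, and suppose `H = N_G(R₀)` is the
unique maximal subgroup of `G` containing `R`. Then the following are equivalent:
(i) `N_G(R₀) = N_G(R)`; (ii) `G = O_r(H)T`; (iii) `[R, H ⊓ T] ≤ R₀`. -/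
theorem stmt_17 {G : Type*} [Group G] [Finite G] {r : ℕ} (hr : r.Prime)
    (T : Subgroup G) [T.Normal] (R : Sylow r G)
    (hG : (R : Subgroup G) ⊔ T = ⊤)
    (H : Subgroup G) (hHdef : H = Subgroup.normalizer (((R : Subgroup G) ⊓ T : Subgroup G) : Set G))
    (hH : IsCoatom H) (hRH : (R : Subgroup G) ≤ H)
    (huniq : ∀ H' : Subgroup G, IsCoatom H' → (R : Subgroup G) ≤ H' → H' = H) :
    ((Subgroup.normalizer (((R : Subgroup G) ⊓ T : Subgroup G) : Set G) = Subgroup.normalizer ((R : Subgroup G) : Set G)) ↔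
        pCoreIn r H ⊔ T = ⊤) ∧
    ((pCoreIn r H ⊔ T = ⊤) ↔
        ⁅(R : Subgroup G), H ⊓ T⁆ ≤ (R : Subgroup G) ⊓ T) :=
  stmt_17_general T R hG H hHdef hRH
end

section
/- Let G be a finite group, r a prime, and K a non-subnormal r-subgroup of G that is subnormal in every proper subgroup of G containing it. Then there is a unique maximal subgroup H of G containing K, and K ≤ O_r(H). -/
/-- `A` is normal in `B` (for subgroups `A ≤ B` of an ambient group `G`). -/
def NormalIn {G : Type*} [Group G] (A B : Subgroup G) : Prop :=
  A ≤ B ∧ ∀ b ∈ B, ∀ a ∈ A, b * a * b⁻¹ ∈ A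

/-- `A` is subnormal in `B`: there is a chain `A = A₀ ⊴ A₁ ⊴ ⋯ ⊴ A_m = B`. -/
def SubnormalIn {G : Type*} [Group G] (A B : Subgroup G) : Prop :=
  Relation.ReflTransGen NormalIn A B

/-!
Consider proper subgroups `T ≥ K` generated by the conjugates of `K` they contain. Such a `T` is
an `r`-group: each of those conjugates is subnormal in `T`, hence lies in `O_r(T)`. By downward
induction, each such `T` lies in a unique maximal subgroup. Indeed `N_G(T)` is proper (otherwise
`K ⊴⊴ T ⊴ G`), so it lies in a maximal subgroup `M₀`. If a maximal `M ≥ T` is not contained in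
`N_G(T)`, then `T ^ M` is again of this kind and strictly larger than `T`; take such a `Z` minimal
with `T < Z ≤ M`. As `T` is subnormal in the `r`-group `Z`, `T ^ Z` lies in a proper normal
subgroup of `Z`, so minimality forces `Z ≤ N_G(T) ≤ M₀`, and the induction hypothesis for `Z`
gives `M = M₀`. Taking `T = K` gives uniqueness, and `K ⊴⊴ H` puts the `r`-group `K` into `O_r(H)`.
-/

open scoped Pointwise
open Subgroup

section

variable {G : Type*} [Group G]

section Subnormal

theorem normalIn_iff {A B : Subgroup G} :
    NormalIn A B ↔ A ≤ B ∧ B ≤ normalizer (A : Set G) := by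
  rw [NormalIn, le_normalizer_iff]

theorem NormalIn.le {A B : Subgroup G} (h : NormalIn A B) : A ≤ B := h.1

theorem NormalIn.smul {A B : Subgroup G} (h : NormalIn A B) (c : MulAut G) :
    NormalIn (c • A) (c • B) := by
  refine ⟨pointwise_smul_le_pointwise_smul_iff.mpr h.1, ?_⟩
  rintro - ⟨b, hb, rfl⟩ - ⟨a, ha, rfl⟩
  exact ⟨b * a * b⁻¹, h.2 b hb a ha, by simp⟩

theorem SubnormalIn.le {A B : Subgroup G} (h : SubnormalIn A B) : A ≤ B := by
  induction h with
  | refl => exact le_rfl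
  | tail _ hBC ih => exact ih.trans hBC.le

theorem SubnormalIn.smul {A B : Subgroup G} (h : SubnormalIn A B) (c : MulAut G) :
    SubnormalIn (c • A) (c • B) :=
  h.lift (c • ·) fun _ _ hAB => hAB.smul c

theorem SubnormalIn.exists_normalIn_of_ne {T Z : Subgroup G} (h : SubnormalIn T Z)
    (hne : T ≠ Z) : ∃ A, T ≤ A ∧ NormalIn A Z ∧ A ≠ Z := by
  induction h with
  | refl => exact absurd rfl hne
  | @tail A Z hTA hAZ ih =>
    by_cases hA : A = Z
    · subst hA
      exact ih hne
    · exact ⟨A, SubnormalIn.le hTA, hAZ, hA⟩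

theorem lt_normalizer_inf_of_lt {Q P : Subgroup G} [Group.IsNilpotent P] (h : Q < P) :
    Q < normalizer (Q : Set G) ⊓ P := by
  have hQ : Q.subgroupOf P < ⊤ :=
    lt_top_iff_ne_top.mpr fun h' => h.not_ge (subgroupOf_eq_top.mp h')
  have := map_subtype_lt_map_subtype.mpr (Group.normalizerCondition_of_isNilpotent _ hQ)
  rwa [← subgroupOf_normalizer_eq h.le, subgroupOf_map_subtype, subgroupOf_map_subtype,
    inf_of_le_left h.le] at this

theorem subnormalIn_of_le [Finite G] {P : Subgroup G} [Group.IsNilpotent P] {Q : Subgroup G}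
    (h : Q ≤ P) : SubnormalIn Q P := by
  induction Q using WellFoundedGT.induction with
  | _ Q ih =>
    obtain rfl | hlt := h.eq_or_lt
    · exact .refl
    · have hN := lt_normalizer_inf_of_lt hlt
      exact .head (normalIn_iff.mpr ⟨hN.le, inf_le_left⟩) (ih _ hN inf_le_right)

end Subnormal

section PCore

def normalPGroupsIn (r : ℕ) (Y : Subgroup G) : Set (Subgroup G) :=
  {P | P ≤ Y ∧ IsPGroup r P ∧ Y ≤ normalizer (P : Set G)}

variable {r : ℕ}

theorem pCoreIn_eq_sSup (Y : Subgroup G) : pCoreIn r Y = sSup (normalPGroupsIn r Y) := by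
  simp only [pCoreIn, normalPGroupsIn, le_normalizer_iff, sSup_eq_iSup]

theorem le_pCoreIn_of_mem {P Y : Subgroup G} (hP : P ∈ normalPGroupsIn r Y) : P ≤ pCoreIn r Y :=
  (pCoreIn_eq_sSup Y).symm ▸ le_sSup hP

theorem supClosed_normalPGroupsIn (Y : Subgroup G) : SupClosed (normalPGroupsIn r Y) := by
  rintro P ⟨hPY, hP, hYP⟩ Q ⟨hQY, hQ, hYQ⟩
  exact ⟨sup_le hPY hQY, hP.to_sup_of_normal_right' hQ (hPY.trans hYQ),
    (le_inf hYP hYQ).trans (normalizer_inf_normalizer_le_normalizer_sup P Q)⟩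

theorem pCoreIn_mem [Finite G] (Y : Subgroup G) : pCoreIn r Y ∈ normalPGroupsIn r Y := by
  rw [pCoreIn_eq_sSup]
  exact (supClosed_normalPGroupsIn Y).sSup_mem (Set.toFinite _)
    ⟨bot_le, IsPGroup.of_bot, le_top.trans_eq (normalizer_eq_top (H := (⊥ : Subgroup G))).symm⟩
    subset_rfl

theorem smul_mem_normalPGroupsIn {P Y : Subgroup G} (hP : P ∈ normalPGroupsIn r Y)
    (c : MulAut G) : c • P ∈ normalPGroupsIn r (c • Y) := by
  obtain ⟨hPY, hPr, hYP⟩ := hP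
  refine ⟨pointwise_smul_le_pointwise_smul_iff.mpr hPY, hPr.map _, le_normalizer_iff.mpr ?_⟩
  rintro - ⟨y, hy, rfl⟩ - ⟨p, hp, rfl⟩
  exact ⟨y * p * y⁻¹, le_normalizer_iff.mp hYP y hy p hp, by simp⟩

theorem normalIn_pCoreIn_of_normalIn [Finite G] {A Y : Subgroup G} (h : NormalIn A Y) :
    NormalIn (pCoreIn r A) Y := by
  refine ⟨(pCoreIn_mem A).1.trans h.le, fun y hy c hc => ?_⟩
  have hyA : MulAut.conj y • A = A :=
    mem_normalizer_iff_map_conj_eq.mp ((normalIn_iff.mp h).2 hy)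
  have := le_pCoreIn_of_mem (smul_mem_normalPGroupsIn (pCoreIn_mem (r := r) A) (MulAut.conj y))
  rw [hyA] at this
  exact this ⟨c, hc, rfl⟩

theorem SubnormalIn.le_pCoreIn [Finite G] {Q Y : Subgroup G} (h : SubnormalIn Q Y)
    (hQ : IsPGroup r Q) : Q ≤ pCoreIn r Y := by
  induction h with
  | refl => exact le_pCoreIn_of_mem ⟨le_rfl, hQ, le_normalizer⟩
  | @tail A Y _ hAY ih =>
    have hOY := normalIn_pCoreIn_of_normalIn (r := r) hAY
    exact ih.trans (le_pCoreIn_of_mem ⟨hOY.le, (pCoreIn_mem A).2.1, (normalIn_iff.mp hOY).2⟩)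

end PCore

section ConjJoin

/-- `T ^ W`. -/
def conjJoin (W T : Subgroup G) : Subgroup G :=
  ⨆ w ∈ W, MulAut.conj w • T

variable {W T : Subgroup G}

theorem smul_le_conjJoin {w : G} (hw : w ∈ W) : MulAut.conj w • T ≤ conjJoin W T :=
  le_iSup₂ (f := fun w (_ : w ∈ W) => MulAut.conj w • T) w hw

theorem le_conjJoin : T ≤ conjJoin W T := by
  simpa using smul_le_conjJoin (T := T) W.one_mem

theorem conjJoin_le (hTW : T ≤ W) : conjJoin W T ≤ W :=
  iSup₂_le fun w hw => conj_smul_le_of_le hTW ⟨w, hw⟩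

theorem conjJoin_le_of_normalIn {A : Subgroup G} (hTA : T ≤ A) (hAW : NormalIn A W) :
    conjJoin W T ≤ A :=
  iSup₂_le fun w hw => by
    rintro - ⟨t, ht, rfl⟩
    exact hAW.2 w hw t (hTA ht)

theorem lt_conjJoin (hWT : ¬ W ≤ normalizer (T : Set G)) : T < conjJoin W T := by
  refine le_conjJoin.lt_of_ne fun h => hWT (le_normalizer_iff.mpr fun w hw t ht => ?_)
  rw [h]
  exact smul_le_conjJoin hw ⟨t, ht, rfl⟩

end ConjJoin

section Zipper

def IsJoinOfConjugates (K T : Subgroup G) : Prop :=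
  K ≤ T ∧ T ≤ ⨆ (g : G) (_ : MulAut.conj g • K ≤ T), MulAut.conj g • K

variable {K T : Subgroup G}

theorem isJoinOfConjugates_self (K : Subgroup G) : IsJoinOfConjugates K K :=
  ⟨le_rfl, le_iSup₂_of_le 1 (by simp) (by simp)⟩

theorem IsJoinOfConjugates.conjJoin (hT : IsJoinOfConjugates K T) (W : Subgroup G) :
    IsJoinOfConjugates K (conjJoin W T) := by
  refine ⟨hT.1.trans le_conjJoin, iSup₂_le fun w hw => ?_⟩
  rw [pointwise_smul_subset_iff]
  refine hT.2.trans (iSup₂_le fun g hg => ?_)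
  rw [← pointwise_smul_subset_iff, smul_smul, ← map_mul]
  refine le_iSup₂_of_le (w * g) ?_ le_rfl
  rw [map_mul, ← smul_smul]
  exact (pointwise_smul_le_pointwise_smul_iff.mpr hg).trans (smul_le_conjJoin hw)

theorem subnormalIn_smul_of_le
    (hws : ∀ M : Subgroup G, M ≠ ⊤ → K ≤ M → SubnormalIn K M) (g : G) {Y : Subgroup G}
    (hY : Y ≠ ⊤) (hKY : MulAut.conj g • K ≤ Y) : SubnormalIn (MulAut.conj g • K) Y := by
  have hY' : (MulAut.conj g)⁻¹ • Y ≠ ⊤ := fun h =>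
    hY (by simpa using congrArg (MulAut.conj g • ·) h)
  simpa using (hws _ hY' (pointwise_smul_subset_iff.mp hKY)).smul (MulAut.conj g)

theorem normalizer_ne_top_of_le (hns : ¬ SubnormalIn K (⊤ : Subgroup G))
    (hws : ∀ M : Subgroup G, M ≠ ⊤ → K ≤ M → SubnormalIn K M) (hKT : K ≤ T)
    (hT : T ≠ ⊤) : normalizer (T : Set G) ≠ ⊤ := fun h =>
  hns ((hws T hT hKT).tail ⟨le_top, le_normalizer_iff.mp h.ge⟩)

variable [Finite G] {r : ℕ}

theorem IsJoinOfConjugates.isPGroup (hK : IsPGroup r K)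
    (hws : ∀ M : Subgroup G, M ≠ ⊤ → K ≤ M → SubnormalIn K M)
    (hT : IsJoinOfConjugates K T) (hTne : T ≠ ⊤) : IsPGroup r T :=
  (pCoreIn_mem T).2.1.to_le <| hT.2.trans <| iSup₂_le fun g hg =>
    (subnormalIn_smul_of_le hws g hTne hg).le_pCoreIn (hK.map _)

theorem exists_isJoinOfConjugates_between_le_normalizer (hr : r.Prime) (hK : IsPGroup r K)
    (hws : ∀ M : Subgroup G, M ≠ ⊤ → K ≤ M → SubnormalIn K M)
    (hT : IsJoinOfConjugates K T) {M : Subgroup G} (hM : M ≠ ⊤) (hTM : T ≤ M)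
    (hMN : ¬ M ≤ normalizer (T : Set G)) :
    ∃ Z, T < Z ∧ Z ≤ M ∧ IsJoinOfConjugates K Z ∧ Z ≤ normalizer (T : Set G) := by
  obtain ⟨Z, ⟨hTZ, hZM, hZ⟩, hmin⟩ :=
    wellFounded_lt.has_min {Z | T < Z ∧ Z ≤ M ∧ IsJoinOfConjugates K Z}
      ⟨conjJoin M T, lt_conjJoin hMN, conjJoin_le hTM, hT.conjJoin M⟩
  refine ⟨Z, hTZ, hZM, hZ, ?_⟩
  by_contra hZN
  have : Fact r.Prime := ⟨hr⟩
  have := (hZ.isPGroup hK hws (ne_top_of_le_ne_top hM hZM)).isNilpotent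
  -- `T` is subnormal in the `r`-group `Z`, so `T ^ Z` lies in a proper normal subgroup of `Z`.
  obtain ⟨A, hTA, hAZ, hAZ'⟩ := (subnormalIn_of_le hTZ.le).exists_normalIn_of_ne hTZ.ne
  exact hmin (conjJoin Z T) ⟨lt_conjJoin hZN, (conjJoin_le hTZ.le).trans hZM, hT.conjJoin Z⟩
    ((conjJoin_le_of_normalIn hTA hAZ).trans_lt (hAZ.le.lt_of_ne hAZ'))

theorem IsJoinOfConjugates.subsingleton_coatoms (hr : r.Prime) (hK : IsPGroup r K)
    (hns : ¬ SubnormalIn K (⊤ : Subgroup G))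
    (hws : ∀ M : Subgroup G, M ≠ ⊤ → K ≤ M → SubnormalIn K M)
    (hT : IsJoinOfConjugates K T) (hTne : T ≠ ⊤) :
    {M : Subgroup G | IsCoatom M ∧ T ≤ M}.Subsingleton := by
  induction T using WellFoundedGT.induction with
  | _ T ih =>
    obtain ⟨M₀, hM₀, hNM₀⟩ := (eq_top_or_exists_le_coatom (normalizer (T : Set G))).resolve_left
      (normalizer_ne_top_of_le hns hws hT.1 hTne)
    suffices h : ∀ M, IsCoatom M → T ≤ M → M = M₀ from
      fun M₁ h₁ M₂ h₂ => (h M₁ h₁.1 h₁.2).trans (h M₂ h₂.1 h₂.2).symm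
    intro M hM hTM
    by_cases hMN : M ≤ normalizer (T : Set G)
    · exact ((hM.le_iff_eq hM₀.1).mp (hMN.trans hNM₀)).symm
    · obtain ⟨Z, hTZ, hZM, hZ, hZN⟩ :=
        exists_isJoinOfConjugates_between_le_normalizer hr hK hws hT hM.1 hTM hMN
      exact ih Z hTZ hZ (ne_top_of_le_ne_top hM.1 hZM) ⟨hM, hZM⟩ ⟨hM₀, hZN.trans hNM₀⟩

end Zipper

end

/-- Via Wielandt's Zipper Lemma: let `G` be a finite group, `r` a prime and `K` an
`r`-subgroup of `G` which is not subnormal in `G` but is subnormal in every proper subgroup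
of `G` containing it (i.e. `K` is weakly subnormal). Then `K` is contained in a unique
maximal subgroup `H` of `G`, and moreover `K ≤ O_r(H)`. -/
theorem stmt_18 {G : Type*} [Group G] [Finite G] {r : ℕ} (hr : r.Prime)
    (K : Subgroup G) (hK : IsPGroup r ↥K)
    (hns : ¬ SubnormalIn K (⊤ : Subgroup G))
    (hws : ∀ M : Subgroup G, M ≠ ⊤ → K ≤ M → SubnormalIn K M) :
    ∃ H : Subgroup G, (IsCoatom H ∧ K ≤ H) ∧
      (∀ H' : Subgroup G, IsCoatom H' → K ≤ H' → H' = H) ∧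
      K ≤ pCoreIn r H := by
  have hKne : K ≠ ⊤ := fun h => hns (h ▸ .refl)
  obtain ⟨H, hH, hKH⟩ := (eq_top_or_exists_le_coatom K).resolve_left hKne
  refine ⟨H, ⟨hH, hKH⟩, fun H' hH' hKH' => ?_, (hws H hH.1 hKH).le_pCoreIn hK⟩
  exact (isJoinOfConjugates_self K).subsingleton_coatoms hr hK hns hws hKne
    ⟨hH', hKH'⟩ ⟨hH, hKH⟩
end
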